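/- arXiv:2506.10222 — 3 statements merged into one kernel-verified Lean document; each statement's English description precedes it below -/
import Mathlib

section
/- Let S be a numerical semigroup of genus g. The number of children of S in the ordinarization tree T_g that have no effective generators (i.e. children S' with h(S') = 0) is at most ⌊m(S)/2⌋. -/
/-- A numerical semigroup: a subset of ℕ containing 0, closed under addition,
with finite complement. -/
def IsNumericalSemigroup (S : Set ℕ) : Prop :=
  0 ∈ S ∧ (∀ a ∈ S, ∀ b ∈ S, a + b ∈ S) ∧ Sᶜ.Finite

/-- The genus: the number of gaps. -/
noncomputable def genus (S : Set ℕ) : ℕ := Sᶜ.ncard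

/-- The Frobenius number: the largest gap. -/
noncomputable def frob (S : Set ℕ) : ℕ := sSup Sᶜ

/-- The multiplicity: the smallest nonzero element. -/
noncomputable def mult (S : Set ℕ) : ℕ := sInf (S \ {0})

/-- The ordinary numerical semigroup of genus `g`: `{0, g+1, g+2, ...}`. -/
def ordinary (g : ℕ) : Set ℕ := {0} ∪ {n | g + 1 ≤ n}

/-- The ordinarization transform `S ∪ {F(S)} \ {m(S)}`. -/
noncomputable def transform (S : Set ℕ) : Set ℕ := (S ∪ {frob S}) \ {mult S}

/-- A minimal generator: a nonzero element of `S` that is not a sum of two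
nonzero elements of `S`. -/
def IsMinGen (S : Set ℕ) (m : ℕ) : Prop :=
  m ∈ S ∧ m ≠ 0 ∧ ¬ ∃ u ∈ S, ∃ v ∈ S, u ≠ 0 ∧ v ≠ 0 ∧ u + v = m

/-- The set of effective generators: minimal generators larger than the
Frobenius number. -/
noncomputable def eg (S : Set ℕ) : Set ℕ := {m | IsMinGen S m ∧ frob S < m}

/-- The number of effective generators. -/
noncomputable def hEff (S : Set ℕ) : ℕ := (eg S).ncard

/-- `S'` is a child of `S` in the ordinarization tree: `S'` is a numerical
semigroup, not the ordinary semigroup of its genus, and its ordinarization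
transform is `S`. -/
def IsChild (S' S : Set ℕ) : Prop :=
  IsNumericalSemigroup S' ∧ S' ≠ ordinary (genus S') ∧ transform S' = S

/-!
A child `S'` of `S` is `S ∪ {m'} \ {F'}` with `m' = m(S')` and `F' = F(S')`, and
`m' < m(S) ≤ 2m'` because `2m' ∈ S`. If `S'` has no effective generators, `F'` is determined
by `m'`: were `S₁, S₂` two such children with the same `m'` and `F₁ < F₂`, then `F₂ ∈ S₁` lies
above `F₁`, so it is a sum of two nonzero elements of `S₁`; both are below `F₂`, hence lie in
`S₂`, forcing `F₂ ∈ S₂`. So these children inject, via their multiplicity, into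
`[⌈m(S)/2⌉, m(S))`, which has `⌊m(S)/2⌋` elements.
-/

section Gaps

variable {T : Set ℕ} {n : ℕ}

lemma mult_le_of_mem (hn : n ∈ T) (h0 : n ≠ 0) : mult T ≤ n :=
  Nat.sInf_le ⟨hn, h0⟩

lemma le_frob_of_notMem (hfin : Tᶜ.Finite) (hn : n ∉ T) : n ≤ frob T :=
  le_csSup hfin.bddAbove hn

lemma mem_of_frob_lt (hfin : Tᶜ.Finite) (hn : frob T < n) : n ∈ T := by
  by_contra h
  exact (le_frob_of_notMem hfin h).not_gt hn

lemma frob_notMem (hfin : Tᶜ.Finite) (hne : Tᶜ.Nonempty) : frob T ∉ T :=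
  Nat.sSup_mem hne hfin.bddAbove

end Gaps

namespace IsNumericalSemigroup

variable {T : Set ℕ} {n : ℕ}

lemma mult_mem_diff (hT : IsNumericalSemigroup T) : mult T ∈ T \ {0} := by
  have hinf : T.Infinite := by simpa using hT.2.2.infinite_compl
  exact Nat.sInf_mem (hinf.sdiff (Set.finite_singleton 0)).nonempty

lemma eq_ordinary_of_forall_notMem_lt_mult (hT : IsNumericalSemigroup T)
    (h : ∀ n ∉ T, n < mult T) : T = ordinary (genus T) := by
  have hm := hT.mult_mem_diff
  have hcompl : Tᶜ = Set.Ico 1 (mult T) := by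
    ext n
    simp only [Set.mem_compl_iff, Set.mem_Ico]
    constructor
    · intro hn
      exact ⟨Nat.one_le_iff_ne_zero.2 fun h0 => hn (h0 ▸ hT.1), h n hn⟩
    · rintro ⟨h1, h2⟩ hn
      exact (mult_le_of_mem hn (by omega)).not_gt h2
  have hgenus : genus T = mult T - 1 := by rw [genus, hcompl, Set.ncard_Ico_nat]
  have h0 : mult T ≠ 0 := hm.2
  ext n
  have hn := Set.ext_iff.1 hcompl n
  simp only [Set.mem_compl_iff, Set.mem_Ico] at hn
  simp only [ordinary, hgenus, Set.mem_union, Set.mem_singleton_iff, Set.mem_ofPred_eq]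
  by_cases hnT : n ∈ T <;>
    simp only [hnT, not_true_eq_false, not_false_eq_true, true_iff, false_iff] at hn ⊢ <;> omega

lemma exists_notMem_mult_le (hT : IsNumericalSemigroup T) (hne : T ≠ ordinary (genus T)) :
    ∃ n ∉ T, mult T ≤ n := by
  by_contra! h
  exact hne (hT.eq_ordinary_of_forall_notMem_lt_mult h)

lemma frob_notMem_of_ne_ordinary (hT : IsNumericalSemigroup T)
    (hne : T ≠ ordinary (genus T)) : frob T ∉ T := by
  obtain ⟨n, hn, -⟩ := hT.exists_notMem_mult_le hne
  exact frob_notMem hT.2.2 ⟨n, hn⟩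

lemma mult_lt_frob_of_ne_ordinary (hT : IsNumericalSemigroup T)
    (hne : T ≠ ordinary (genus T)) : mult T < frob T := by
  obtain ⟨n, hn, hmn⟩ := hT.exists_notMem_mult_le hne
  refine lt_of_le_of_ne (hmn.trans (le_frob_of_notMem hT.2.2 hn)) fun h => ?_
  exact hT.frob_notMem_of_ne_ordinary hne (h ▸ hT.mult_mem_diff.1)

lemma eg_subset_Ioc (hT : IsNumericalSemigroup T) :
    eg T ⊆ Set.Ioc (frob T) (frob T + mult T) := by
  rintro x ⟨⟨-, -, hdec⟩, hxF⟩
  refine ⟨hxF, not_lt.1 fun hx => hdec ?_⟩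
  have hm := hT.mult_mem_diff
  have hm0 : mult T ≠ 0 := hm.2
  exact ⟨mult T, hm.1, x - mult T, mem_of_frob_lt hT.2.2 (by omega), hm0, by omega, by omega⟩

lemma exists_add_eq_of_hEff_eq_zero (hT : IsNumericalSemigroup T) (h0 : hEff T = 0)
    (hn : n ∈ T) (hF : frob T < n) :
    ∃ u ∈ T, ∃ v ∈ T, u ≠ 0 ∧ v ≠ 0 ∧ u + v = n := by
  have hfin : (eg T).Finite := (Set.finite_Ioc _ _).subset hT.eg_subset_Ioc
  have hempty : eg T = ∅ := (Set.ncard_eq_zero hfin).1 h0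
  by_contra hdec
  exact hempty.subset ⟨⟨hn, by omega, hdec⟩, hF⟩

end IsNumericalSemigroup

namespace IsChild

variable {S S' S₁ S₂ : Set ℕ} {n : ℕ}

lemma mem_parent_iff (hC : IsChild S' S) : n ∈ S ↔ (n ∈ S' ∨ n = frob S') ∧ n ≠ mult S' := by
  rw [← hC.2.2, transform]
  simp only [Set.mem_sdiff, Set.mem_union, Set.mem_singleton_iff]

lemma mult_lt_frob (hC : IsChild S' S) : mult S' < frob S' :=
  hC.1.mult_lt_frob_of_ne_ordinary hC.2.1

lemma mem_iff (hC : IsChild S' S) : n ∈ S' ↔ (n ∈ S ∨ n = mult S') ∧ n ≠ frob S' := by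
  have hF := hC.1.frob_notMem_of_ne_ordinary hC.2.1
  have hm := hC.1.mult_mem_diff.1
  rw [hC.mem_parent_iff]
  constructor
  · intro hn
    refine ⟨?_, fun h => hF (h ▸ hn)⟩
    by_cases hnm : n = mult S'
    · exact Or.inr hnm
    · exact Or.inl ⟨Or.inl hn, hnm⟩
  · rintro ⟨⟨hn | hnF, -⟩ | rfl, hnF'⟩
    · exact hn
    · exact absurd hnF hnF'
    · exact hm

lemma frob_mem (hC : IsChild S' S) : frob S' ∈ S :=
  hC.mem_parent_iff.2 ⟨Or.inr rfl, hC.mult_lt_frob.ne'⟩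

lemma two_mul_mult_mem (hC : IsChild S' S) : 2 * mult S' ∈ S := by
  have hm := hC.1.mult_mem_diff
  have hm0 : mult S' ≠ 0 := hm.2
  refine hC.mem_parent_iff.2 ⟨Or.inl ?_, by omega⟩
  rw [two_mul]
  exact hC.1.2.1 _ hm.1 _ hm.1

lemma mult_le_two_mul_mult (hC : IsChild S' S) : mult S ≤ 2 * mult S' := by
  have hm0 : mult S' ≠ 0 := hC.1.mult_mem_diff.2
  exact mult_le_of_mem hC.two_mul_mult_mem (by omega)

lemma mult_lt_mult (hC : IsChild S' S) : mult S' < mult S := by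
  have hm0 : mult S' ≠ 0 := hC.1.mult_mem_diff.2
  have hmS : mult S ∈ S \ {0} := Nat.sInf_mem ⟨_, hC.two_mul_mult_mem, by simp [hm0]⟩
  obtain ⟨hmS' | hmF, hne⟩ := hC.mem_parent_iff.1 hmS.1
  · exact lt_of_le_of_ne (mult_le_of_mem hmS' hmS.2) (Ne.symm hne)
  · exact hmF ▸ hC.mult_lt_frob

lemma frob_le_frob_of_mult_eq (hC₁ : IsChild S₁ S) (hC₂ : IsChild S₂ S) (h₁ : hEff S₁ = 0)
    (hm : mult S₁ = mult S₂) : frob S₂ ≤ frob S₁ := by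
  by_contra! hlt
  have hF₂ : frob S₂ ∈ S₁ := hC₁.mem_iff.2 ⟨Or.inl hC₂.frob_mem, hlt.ne'⟩
  obtain ⟨u, hu, v, hv, hu0, hv0, huv⟩ := hC₁.1.exists_add_eq_of_hEff_eq_zero h₁ hF₂ hlt
  have hmem₂ : ∀ w ∈ S₁, w < frob S₂ → w ∈ S₂ := fun w hw hwF =>
    hC₂.mem_iff.2 ⟨hm ▸ (hC₁.mem_iff.1 hw).1, hwF.ne⟩
  refine hC₂.1.frob_notMem_of_ne_ordinary hC₂.2.1 ?_
  rw [← huv]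
  exact hC₂.1.2.1 _ (hmem₂ u hu (by omega)) _ (hmem₂ v hv (by omega))

lemma eq_of_mult_eq (hC₁ : IsChild S₁ S) (hC₂ : IsChild S₂ S) (h₁ : hEff S₁ = 0)
    (h₂ : hEff S₂ = 0) (hm : mult S₁ = mult S₂) : S₁ = S₂ := by
  have hF : frob S₁ = frob S₂ := le_antisymm
    (frob_le_frob_of_mult_eq hC₂ hC₁ h₂ hm.symm) (frob_le_frob_of_mult_eq hC₁ hC₂ h₁ hm)
  ext n
  rw [hC₁.mem_iff, hC₂.mem_iff, hm, hF]

end IsChild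

theorem stmt_3_general (S : Set ℕ) :
    {S' : Set ℕ | IsChild S' S ∧ hEff S' = 0}.ncard ≤ mult S / 2 := by
  have hmaps : ∀ S' ∈ {S' : Set ℕ | IsChild S' S ∧ hEff S' = 0},
      mult S' ∈ Set.Ico ((mult S + 1) / 2) (mult S) := by
    rintro S' ⟨hC, -⟩
    have := hC.mult_le_two_mul_mult
    have := hC.mult_lt_mult
    simp only [Set.mem_Ico]
    omega
  have hinj : Set.InjOn mult {S' : Set ℕ | IsChild S' S ∧ hEff S' = 0} :=
    fun _ ⟨hC₁, h₁⟩ _ ⟨hC₂, h₂⟩ hm => hC₁.eq_of_mult_eq hC₂ h₁ h₂ hm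
  calc _ ≤ (Set.Ico ((mult S + 1) / 2) (mult S)).ncard :=
        Set.ncard_le_ncard_of_injOn mult hmaps hinj
    _ = mult S / 2 := by rw [Set.ncard_Ico_nat]; omega

theorem stmt_3 (g : ℕ) (S : Set ℕ)
    (hS : IsNumericalSemigroup S) (hgS : genus S = g) :
    {S' : Set ℕ | IsChild S' S ∧ hEff S' = 0}.ncard ≤ mult S / 2 :=
  stmt_3_general S
end

section
/- Let S = ⟨a, b⟩ where 2 ≤ a < b, gcd(a, b) = 1, and a is even. Then 0 ≤ r(S) − (ab − a − 4)/8 ≤ a/4. -/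
/-- The ordinarization number: `r(S) = #(S ∩ {1, ..., g(S)})`. -/
noncomputable def ordNum (S : Set ℕ) : ℕ := (S ∩ Set.Icc 1 (genus S)).ncard

/-!
Every element of `⟨a, b⟩` is uniquely `a x + b y` with `y < a`. For `a = 2c` the genus
`g = (a - 1)(b - 1)/2` satisfies `b (c - 1) ≤ g < b c`, so the elements of `[0, g]` are counted
by `r + 1 = ∑_{y < c} (⌊(g - b y)/a⌋ + 1)`. Writing `g - b y = a ⌊(g - b y)/a⌋ + ρ_y` and summing
gives `c (8 r - (a b - a - 4)) = 6 c² - 2 c - 4 ∑ ρ_y`. The residues `ρ_y` are `c` distinct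
numbers in `[0, a)`, so `c (c - 1) ≤ 2 ∑ ρ_y ≤ c (3 c - 1)`, which is exactly the claim.
-/

open Finset

section ClosurePair

variable {a b : ℕ}

lemma mem_closure_pair_iff {m : ℕ} :
    m ∈ AddSubmonoid.closure ({a, b} : Set ℕ) ↔ ∃ x y, a * x + b * y = m := by
  simp [AddSubmonoid.mem_closure_pair, mul_comm]

lemma eq_of_mul_add_mul_eq (hcop : a.Coprime b) {x y x' y' : ℕ} (hy : y < a) (hy' : y' < a)
    (h : a * x + b * y = a * x' + b * y') : x = x' ∧ y = y' := by
  have hmod : b * y ≡ b * y' [MOD a] := by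
    unfold Nat.ModEq
    rw [← Nat.mul_add_mod a x, h, Nat.mul_add_mod]
  have hyy : y = y' := (hmod.cancel_left_of_coprime hcop).eq_of_lt_of_lt hy hy'
  subst hyy
  exact ⟨Nat.eq_of_mul_eq_mul_left (by omega) (Nat.add_right_cancel h), rfl⟩

lemma exists_mul_add_mul_eq_of_mem (ha : 0 < a) {m : ℕ}
    (hm : m ∈ AddSubmonoid.closure ({a, b} : Set ℕ)) : ∃ x, ∃ y < a, a * x + b * y = m := by
  obtain ⟨x, y, rfl⟩ := mem_closure_pair_iff.mp hm
  refine ⟨x + b * (y / a), y % a, Nat.mod_lt y ha, ?_⟩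
  conv_rhs => rw [← Nat.div_add_mod y a]
  ring

lemma exists_add_mul_eq_mul_of_notMem (hcop : a.Coprime b) (ha : 0 < a) {m : ℕ}
    (hm : m ∉ AddSubmonoid.closure ({a, b} : Set ℕ)) :
    ∃ y < a, ∃ k, m + a * (k + 1) = b * y := by
  obtain ⟨y, hy, hym⟩ := Nat.exists_mul_mod_eq_of_coprime m hcop.symm ha.ne'
  refine ⟨y, hy, ?_⟩
  by_cases hle : b * y ≤ m
  · obtain ⟨x, hx⟩ := Nat.dvd_of_mod_eq_zero (Nat.sub_mod_eq_zero_of_mod_eq hym.symm)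
    exact absurd (mem_closure_pair_iff.mpr ⟨x, y, by omega⟩) hm
  · obtain ⟨j, hj⟩ := Nat.dvd_of_mod_eq_zero (Nat.sub_mod_eq_zero_of_mod_eq hym)
    obtain ⟨k, rfl⟩ : ∃ k, j = k + 1 := Nat.exists_eq_succ_of_ne_zero (by rintro rfl; omega)
    exact ⟨k, by omega⟩

/-- Writing a gap as `m = b y - a (k + 1)` with `y < a`, the reflected number is
`a k + b (a - 1 - y)`. -/
lemma sub_mem_closure_pair_of_notMem (hcop : a.Coprime b) (ha : 0 < a) {m : ℕ}
    (hm : m ∉ AddSubmonoid.closure ({a, b} : Set ℕ)) :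
    a * b - a - b - m ∈ AddSubmonoid.closure ({a, b} : Set ℕ) := by
  obtain ⟨y, hy, k, hk⟩ := exists_add_mul_eq_mul_of_notMem hcop ha hm
  obtain ⟨z, rfl⟩ : ∃ z, a = y + 1 + z := ⟨a - 1 - y, by omega⟩
  refine mem_closure_pair_iff.mpr ⟨k, z, ?_⟩
  ring_nf
  ring_nf at hk
  omega

/-- The reflection `m ↦ a b - a - b - m` exchanges the gaps and the elements below the
Frobenius number, so exactly half of the `(a - 1) (b - 1)` numbers up to it are gaps. -/
lemma two_mul_genus_closure_pair (hcop : a.Coprime b) (ha : 1 < a) (hb : 1 < b) :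
    2 * genus (AddSubmonoid.closure ({a, b} : Set ℕ) : Set ℕ) = (a - 1) * (b - 1) := by
  classical
  set S := AddSubmonoid.closure ({a, b} : Set ℕ)
  set F := a * b - a - b
  obtain ⟨hF, hgt⟩ := frobeniusNumber_iff.mp (frobeniusNumber_pair hcop ha hb)
  have hgaps : (S : Set ℕ)ᶜ = ↑((range (F + 1)).filter (· ∉ S)) := by
    ext m
    simp only [Set.mem_compl_iff, SetLike.mem_coe, coe_filter, mem_range, Set.mem_ofPred_eq,
      iff_and_self]
    exact fun hm => by_contra fun h => hm (hgt m (by omega))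
  have hreflect : #((range (F + 1)).filter (· ∉ S)) = #((range (F + 1)).filter (· ∈ S)) := by
    refine card_nbij' (F - ·) (F - ·) ?_ ?_ ?_ ?_
    · intro m hm
      simp only [coe_filter, mem_range, Set.mem_ofPred_eq] at hm ⊢
      exact ⟨by omega, sub_mem_closure_pair_of_notMem hcop (by omega) hm.2⟩
    · intro m hm
      simp only [coe_filter, mem_range, Set.mem_ofPred_eq] at hm ⊢
      refine ⟨by omega, fun h => hF ?_⟩
      simpa [Nat.sub_add_cancel (show m ≤ F by omega)] using S.add_mem h hm.2
    · intro m hm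
      simp only [coe_filter, mem_range, Set.mem_ofPred_eq] at hm
      dsimp only
      omega
    · intro m hm
      simp only [coe_filter, mem_range, Set.mem_ofPred_eq] at hm
      dsimp only
      omega
  have hsplit := card_filter_add_card_filter_not (s := range (F + 1)) (· ∈ S)
  rw [card_range, ← hreflect] at hsplit
  have hab : a + b ≤ a * b := Nat.add_le_mul ha hb
  have hF1 : F + 1 = (a - 1) * (b - 1) := by
    simp only [F, Nat.sub_sub]
    zify [hab, ha.le, hb.le]
    ring
  rw [genus, hgaps, Set.ncard_coe_finset]
  omega

end ClosurePair

section Counting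

variable {a b : ℕ}

lemma ncard_closure_pair_inter_Iic (hcop : a.Coprime b) {c N : ℕ} (hca : c ≤ a)
    (hlow : b * (c - 1) ≤ N) (hhigh : N < b * c) :
    ((AddSubmonoid.closure ({a, b} : Set ℕ) : Set ℕ) ∩ Set.Iic N).ncard =
      ∑ y ∈ range c, ((N - b * y) / a + 1) := by
  have hc : 0 < c := Nat.pos_of_ne_zero (by rintro rfl; simp at hhigh)
  have ha : 0 < a := by omega
  have hrep : ((AddSubmonoid.closure ({a, b} : Set ℕ) : Set ℕ) ∩ Set.Iic N) =
      (fun p : (_ : ℕ) × ℕ => a * p.2 + b * p.1) ''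
        ↑((range c).sigma fun y => range ((N - b * y) / a + 1)) := by
    ext m
    simp only [Set.mem_inter_iff, SetLike.mem_coe, Set.mem_Iic, Set.mem_image, coe_sigma,
      Set.mem_sigma_iff, coe_range, Set.mem_Iio, Nat.lt_succ_iff,
      Nat.le_div_iff_mul_le ha, Sigma.exists]
    constructor
    · rintro ⟨hm, hmN⟩
      obtain ⟨x, y, hy, rfl⟩ := exists_mul_add_mul_eq_of_mem ha hm
      have hyc : y < c := Nat.lt_of_mul_lt_mul_left (lt_of_le_of_lt (by omega) hhigh)
      exact ⟨y, x, ⟨hyc, by rw [mul_comm]; omega⟩, rfl⟩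
    · rintro ⟨y, x, ⟨hyc, hx⟩, rfl⟩
      have hyN : b * y ≤ N := le_trans (Nat.mul_le_mul_left b (by omega)) hlow
      exact ⟨mem_closure_pair_iff.mpr ⟨x, y, rfl⟩, by rw [mul_comm] at hx; omega⟩
  have hinj : Set.InjOn (fun p : (_ : ℕ) × ℕ => a * p.2 + b * p.1)
      ↑((range c).sigma fun y => range ((N - b * y) / a + 1)) := by
    rintro ⟨y, x⟩ hp ⟨y', x'⟩ hp' h
    simp only [coe_sigma, Set.mem_sigma_iff, coe_range, Set.mem_Iio] at hp hp'
    have h' : a * x + b * y = a * x' + b * y' := h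
    obtain ⟨rfl, rfl⟩ := eq_of_mul_add_mul_eq hcop (by omega) (by omega) h'
    rfl
  rw [hrep, hinj.ncard_image, Set.ncard_coe_finset, card_sigma]
  simp only [card_range]

lemma ncard_inter_Icc_one_add_one {S : Set ℕ} (h0 : 0 ∈ S) (N : ℕ) :
    (S ∩ Set.Icc 1 N).ncard + 1 = (S ∩ Set.Iic N).ncard := by
  have hinsert : S ∩ Set.Iic N = insert 0 (S ∩ Set.Icc 1 N) := by
    ext m
    simp only [Set.mem_inter_iff, Set.mem_Iic, Set.mem_insert_iff, Set.mem_Icc]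
    constructor
    · rintro ⟨hm, hmN⟩
      rcases Nat.eq_zero_or_pos m with rfl | hpos
      · exact Or.inl rfl
      · exact Or.inr ⟨hm, hpos, hmN⟩
    · rintro (rfl | ⟨hm, -, hmN⟩)
      · exact ⟨h0, Nat.zero_le N⟩
      · exact ⟨hm, hmN⟩
  rw [hinsert, Set.ncard_insert_of_notMem (by simp) ((Set.finite_Icc 1 N).inter_of_right S)]

lemma injOn_sub_mul_mod (hcop : a.Coprime b) {c N : ℕ} (hca : c ≤ a) (hlow : b * (c - 1) ≤ N) :
    Set.InjOn (fun y => (N - b * y) % a) ↑(range c) := by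
  intro y hy y' hy' h
  simp only [coe_range, Set.mem_Iio] at hy hy'
  have hby : ∀ z < c, b * z ≤ N := fun z hz =>
    le_trans (Nat.mul_le_mul_left b (by omega)) hlow
  have hsum : N - b * y + b * y ≡ N - b * y' + b * y' [MOD a] := by
    rw [Nat.sub_add_cancel (hby y hy), Nat.sub_add_cancel (hby y' hy')]
  exact ((Nat.ModEq.add_left_cancel h hsum).cancel_left_of_coprime hcop).eq_of_lt_of_lt
    (by omega) (by omega)

lemma two_mul_sum_range_id_intCast (c : ℕ) : 2 * ∑ i ∈ range c, (i : ℤ) = c * (c - 1) := by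
  induction c with
  | zero => simp
  | succ n ih =>
    rw [sum_range_succ]
    push_cast
    linarith

lemma sum_sub_mul_mod_bounds (hcop : a.Coprime b) {c N : ℕ} (hca : c ≤ a)
    (hlow : b * (c - 1) ≤ N) :
    (c : ℤ) * (c - 1) ≤ 2 * ∑ y ∈ range c, (((N - b * y) % a : ℕ) : ℤ) ∧
      2 * ∑ y ∈ range c, (((N - b * y) % a : ℕ) : ℤ) ≤ c * (2 * a - c - 1) := by
  set s := (range c).image fun y => (((N - b * y) % a : ℕ) : ℤ)
  have hinj : Set.InjOn (fun y => (((N - b * y) % a : ℕ) : ℤ)) ↑(range c) :=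
    fun y hy y' hy' h => injOn_sub_mul_mod hcop hca hlow hy hy' (Nat.cast_injective h)
  have hcard : #s = c := by rw [card_image_of_injOn hinj, card_range]
  have hsum : ∑ x ∈ s, x = ∑ y ∈ range c, (((N - b * y) % a : ℕ) : ℤ) := sum_image hinj
  have hlt : ∀ x ∈ s, 0 ≤ x ∧ x ≤ a - 1 := by
    simp only [s, mem_image]
    rintro _ ⟨y, hy, rfl⟩
    rw [mem_range] at hy
    have : (N - b * y) % a < a := Nat.mod_lt _ (by omega)
    omega
  have hlower := sum_range_le_sum fun x hx => (hlt x hx).1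
  have hupper := sum_le_sum_range fun x hx => (hlt x hx).2
  rw [hcard, hsum] at hlower hupper
  simp only [zero_add, sum_sub_distrib, sum_const, card_range, nsmul_eq_mul] at hlower hupper
  have hgauss := two_mul_sum_range_id_intCast c
  constructor <;> nlinarith

end Counting

lemma sum_div_mod_sub_mul {a b c N : ℕ} (hlow : b * (c - 1) ≤ N) :
    a * ∑ y ∈ range c, (((N - b * y) / a : ℕ) : ℤ) + ∑ y ∈ range c, (((N - b * y) % a : ℕ) : ℤ) =
      c * N - b * ∑ y ∈ range c, (y : ℤ) := by
  have hterm : ∀ y ∈ range c,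
      a * (((N - b * y) / a : ℕ) : ℤ) + (((N - b * y) % a : ℕ) : ℤ) = N - b * y := by
    intro y hy
    have hby : b * y ≤ N := le_trans (Nat.mul_le_mul_left b (by simp at hy; omega)) hlow
    rw [← Nat.cast_mul, ← Nat.cast_add, Nat.div_add_mod, Nat.cast_sub hby, Nat.cast_mul]
  rw [mul_sum, ← sum_add_distrib, sum_congr rfl hterm, sum_sub_distrib, sum_const, card_range,
    nsmul_eq_mul, mul_sum]

section EvenGenerator

variable {a b c : ℕ} (hcop : a.Coprime b) (ha : 1 < a) (hab : a < b) (hc : a = c + c)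
include hcop ha hab hc

lemma genus_closure_pair_mem_Ico :
    b * (c - 1) ≤ genus (AddSubmonoid.closure ({a, b} : Set ℕ) : Set ℕ) ∧
      genus (AddSubmonoid.closure ({a, b} : Set ℕ) : Set ℕ) < b * c := by
  have hg := two_mul_genus_closure_pair hcop ha (by omega)
  obtain ⟨c, rfl⟩ : ∃ d, c = d + 1 := Nat.exists_eq_succ_of_ne_zero (by omega)
  obtain ⟨b, rfl⟩ : ∃ e, b = e + 1 := Nat.exists_eq_succ_of_ne_zero (by omega)
  subst hc
  rw [show c + 1 + (c + 1) - 1 = 2 * c + 1 by omega, Nat.add_sub_cancel] at hg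
  simp only [Nat.add_sub_cancel]
  constructor <;> nlinarith

lemma mul_eight_mul_ordNum_closure_pair :
    (c : ℤ) * (8 * ordNum (AddSubmonoid.closure ({a, b} : Set ℕ) : Set ℕ) - (a * b - a - 4)) =
      6 * c ^ 2 - 2 * c - 4 * ∑ y ∈ range c,
        (((genus (AddSubmonoid.closure ({a, b} : Set ℕ) : Set ℕ) - b * y) % a : ℕ) : ℤ) := by
  set S := (AddSubmonoid.closure ({a, b} : Set ℕ) : Set ℕ)
  set g := genus S
  obtain ⟨hlow, hhigh⟩ := genus_closure_pair_mem_Ico hcop ha hab hc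
  have hcount : ordNum S + 1 = ∑ y ∈ range c, ((g - b * y) / a + 1) := by
    rw [ordNum, ncard_inter_Icc_one_add_one (zero_mem _),
      ncard_closure_pair_inter_Iic hcop (by omega) hlow hhigh]
  have hcount' : (ordNum S : ℤ) + 1 = ∑ y ∈ range c, (((g - b * y) / a : ℕ) : ℤ) + c := by
    rw [sum_add_distrib, sum_const, card_range, smul_eq_mul, mul_one] at hcount
    exact_mod_cast hcount
  have hdiv := sum_div_mod_sub_mul (a := a) hlow
  have hgauss := two_mul_sum_range_id_intCast c
  have hg : 2 * (g : ℤ) = (a - 1) * (b - 1) := by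
    have := two_mul_genus_closure_pair hcop ha (by omega)
    rw [← Nat.cast_ofNat, ← Nat.cast_mul, this]
    push_cast [Nat.cast_sub ha.le, Nat.cast_sub (show 1 ≤ b by omega)]
    ring
  have ha' : (a : ℤ) = c + c := by exact_mod_cast hc
  rw [ha'] at hdiv hg ⊢
  linear_combination (8 * c) * hcount' + 4 * hdiv - 2 * b * hgauss + 2 * c * hg

lemma eight_mul_ordNum_closure_pair_bounds :
    0 ≤ 8 * (ordNum (AddSubmonoid.closure ({a, b} : Set ℕ) : Set ℕ) : ℤ) - (a * b - a - 4) ∧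
      8 * (ordNum (AddSubmonoid.closure ({a, b} : Set ℕ) : Set ℕ) : ℤ) - (a * b - a - 4) ≤
        2 * a := by
  obtain ⟨hlow, -⟩ := genus_closure_pair_mem_Ico hcop ha hab hc
  obtain ⟨hR₁, hR₂⟩ := sum_sub_mul_mod_bounds hcop (by omega) hlow
  have hkey := mul_eight_mul_ordNum_closure_pair hcop ha hab hc
  have hcpos : (0 : ℤ) < c := by exact_mod_cast (show 0 < c by omega)
  have ha' : (a : ℤ) = c + c := by exact_mod_cast hc
  rw [ha'] at hR₂ hkey ⊢
  constructor
  · refine nonneg_of_mul_nonneg_right (a := (c : ℤ)) ?_ hcpos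
    linarith
  · refine le_of_mul_le_mul_left (a := (c : ℤ)) ?_ hcpos
    linarith

end EvenGenerator

theorem stmt_13 (a b : ℕ) (ha : 2 ≤ a) (hab : a < b) (hcop : Nat.Coprime a b)
    (heven : Even a)
    (S : Set ℕ) (hS : S = {m | ∃ x y : ℕ, a * x + b * y = m}) :
    0 ≤ (ordNum S : ℚ) - ((a : ℚ) * b - a - 4) / 8 ∧
      (ordNum S : ℚ) - ((a : ℚ) * b - a - 4) / 8 ≤ (a : ℚ) / 4 := by
  obtain ⟨c, hc⟩ := heven
  have hS' : S = AddSubmonoid.closure ({a, b} : Set ℕ) := by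
    ext m
    rw [hS, SetLike.mem_coe, mem_closure_pair_iff, Set.mem_ofPred_eq]
  obtain ⟨hlower, hupper⟩ := eight_mul_ordNum_closure_pair_bounds hcop ha hab hc
  rw [← hS'] at hlower hupper
  have hlower' : (0 : ℚ) ≤ 8 * ordNum S - (a * b - a - 4) := by exact_mod_cast hlower
  have hupper' : (8 * ordNum S - (a * b - a - 4) : ℚ) ≤ 2 * a := by exact_mod_cast hupper
  constructor <;> linarith
end

section
/- Let 2 ≤ a_1 < a_2 < ⋯ < a_n be pairwise relatively prime integers and let S = ⟨q_1, ..., q_n⟩ be the supersymmetric numerical semigroup corresponding to a_1, ..., a_n, with genus g = g(S). Then the ordinarization number of S satisfies r(S) = −1 + #{(b_1, ..., b_n) ∈ ℕ^n : b_1 q_1 + ⋯ + b_n q_n ≤ g and b_i ≤ a_i − 1 for every i ∈ {2, ..., n}}. -/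
theorem ordNum_add_one_eq {S : Set ℕ} (h0 : 0 ∈ S) :
    ordNum S + 1 = (S ∩ Set.Iic (genus S)).ncard := by
  have hsplit : S ∩ Set.Iic (genus S) = insert 0 (S ∩ Set.Icc 1 (genus S)) := by
    ext m
    rcases Nat.eq_zero_or_pos m with rfl | hm
    · simp [h0]
    · simp [hm.ne', Nat.one_le_iff_ne_zero]
  rw [hsplit, Set.ncard_insert_of_notMem (by simp)
    ((Set.finite_Icc _ _).subset Set.inter_subset_right)]
  rfl

section Cofactor

variable {ι : Type*} [Fintype ι] [DecidableEq ι] (a : ι → ℕ)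

def cofactor (i : ι) : ℕ := ∏ j ∈ Finset.univ.erase i, a j

theorem cofactor_mul_self (i : ι) : cofactor a i * a i = ∏ j, a j := by
  rw [cofactor, mul_comm, Finset.mul_prod_erase _ _ (Finset.mem_univ i)]

theorem prod_div_eq_cofactor {i : ι} (hi : 0 < a i) : (∏ j, a j) / a i = cofactor a i := by
  rw [← cofactor_mul_self, Nat.mul_div_cancel _ hi]

theorem dvd_cofactor {i j : ι} (hij : i ≠ j) : a i ∣ cofactor a j :=
  Finset.dvd_prod_of_mem a (Finset.mem_erase.2 ⟨hij, Finset.mem_univ i⟩)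

theorem coprime_cofactor (hcop : Pairwise fun i j => Nat.Coprime (a i) (a j)) (i : ι) :
    Nat.Coprime (a i) (cofactor a i) :=
  Nat.Coprime.prod_right fun _ hj => hcop (Finset.mem_erase.1 hj).1.symm

theorem cofactor_ne_zero {i : ι} (ha : ∀ j ≠ i, 0 < a j) : cofactor a i ≠ 0 :=
  Finset.prod_ne_zero_iff.2 fun j hj => (ha j (Finset.mem_erase.1 hj).1).ne'

def cofactorSum (v : ι → ℕ) : ℕ := ∑ i, v i * cofactor a i

theorem cofactorSum_eq_add_sum_erase (v : ι → ℕ) (i : ι) :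
    cofactorSum a v = v i * cofactor a i + ∑ j ∈ Finset.univ.erase i, v j * cofactor a j :=
  (Finset.add_sum_erase _ _ (Finset.mem_univ i)).symm

theorem cofactorSum_modEq (v : ι → ℕ) (i : ι) :
    cofactorSum a v ≡ v i * cofactor a i [MOD a i] := by
  have hrest : a i ∣ ∑ j ∈ Finset.univ.erase i, v j * cofactor a j :=
    Finset.dvd_sum fun j hj => (dvd_cofactor a (Finset.mem_erase.1 hj).1.symm).mul_left _
  rw [cofactorSum_eq_add_sum_erase a v i]
  simpa using (Nat.modEq_zero_iff_dvd.2 hrest).add_left (v i * cofactor a i)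

theorem cofactorSum_injOn (hcop : Pairwise fun i j => Nat.Coprime (a i) (a j)) (i₀ : ι)
    (ha : ∀ i ≠ i₀, 0 < a i) :
    Set.InjOn (cofactorSum a) {v | ∀ i ≠ i₀, v i < a i} := by
  intro v hv w hw hvw
  have hne : ∀ i ≠ i₀, v i = w i := fun i hi =>
    (((cofactorSum_modEq a v i).symm.trans (hvw ▸ cofactorSum_modEq a w i)).cancel_right_of_coprime
      (coprime_cofactor a hcop i)).eq_of_lt_of_lt (hv i hi) (hw i hi)
  have hrest : ∑ j ∈ Finset.univ.erase i₀, v j * cofactor a j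
      = ∑ j ∈ Finset.univ.erase i₀, w j * cofactor a j :=
    Finset.sum_congr rfl fun j hj => by rw [hne j (Finset.mem_erase.1 hj).1]
  have h₀ : v i₀ * cofactor a i₀ = w i₀ * cofactor a i₀ := by
    rw [cofactorSum_eq_add_sum_erase a v i₀, cofactorSum_eq_add_sum_erase a w i₀, hrest] at hvw
    exact Nat.add_right_cancel hvw
  funext i
  by_cases hi : i = i₀
  · subst hi
    exact Nat.eq_of_mul_eq_mul_right (Nat.pos_of_ne_zero (cofactor_ne_zero a ha)) h₀
  · exact hne i hi

theorem exists_lt_cofactorSum_eq (i₀ : ι) (ha : ∀ i ≠ i₀, 0 < a i) (v : ι → ℕ) :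
    ∃ w : ι → ℕ, (∀ i ≠ i₀, w i < a i) ∧ cofactorSum a w = cofactorSum a v := by
  refine ⟨(fun j => v j % a j) + Pi.single i₀ ((∑ j, v j / a j) * a i₀), fun i hi => ?_, ?_⟩
  · simpa [Pi.single_eq_of_ne hi] using Nat.mod_lt _ (ha i hi)
  · have hsplit : ∀ j, v j * cofactor a j = v j % a j * cofactor a j + v j / a j * ∏ k, a k :=
      fun j => by
        rw [← cofactor_mul_self a j]
        conv_lhs => rw [← Nat.mod_add_div (v j) (a j)]
        ring
    simp only [cofactorSum, Pi.add_apply, add_mul, Finset.sum_add_distrib, hsplit,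
      ← Finset.sum_mul, ← cofactor_mul_self a i₀]
    simp only [Pi.single_apply, ite_mul, zero_mul, Finset.sum_ite_eq', Finset.mem_univ,
      ↓reduceIte, Nat.add_left_cancel_iff]
    ring

theorem ncard_setOf_cofactorSum_le_eq (hcop : Pairwise fun i j => Nat.Coprime (a i) (a j)) (i₀ : ι)
    (ha : ∀ i ≠ i₀, 0 < a i) (B : ℕ) :
    {v | cofactorSum a v ≤ B ∧ ∀ i ≠ i₀, v i < a i}.ncard
      = (Set.range (cofactorSum a) ∩ Set.Iic B).ncard := by
  rw [← ((cofactorSum_injOn a hcop i₀ ha).mono fun _ hv => hv.2).ncard_image]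
  congr 1
  ext m
  constructor
  · rintro ⟨v, hv, rfl⟩
    exact ⟨⟨v, rfl⟩, hv.1⟩
  · rintro ⟨⟨v, rfl⟩, hB⟩
    obtain ⟨w, hw, hwv⟩ := exists_lt_cofactorSum_eq a i₀ ha v
    exact ⟨w, ⟨hwv ▸ hB, hw⟩, hwv⟩

end Cofactor

theorem stmt_17_general (n : ℕ) (hn : 0 < n) (a : Fin n → ℕ)
    (h2 : ∀ i, 2 ≤ a i)
    (hcop : ∀ i j, i ≠ j → Nat.Coprime (a i) (a j))
    (q : Fin n → ℕ) (hq : ∀ i, q i = (∏ j, a j) / a i)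
    (S : Set ℕ) (hS : S = {m | ∃ v : Fin n → ℕ, ∑ i, v i * q i = m}) :
    ordNum S + 1 =
      {v : Fin n → ℕ | (∑ i, v i * q i ≤ genus S) ∧
        ∀ i : Fin n, i ≠ ⟨0, hn⟩ → v i ≤ a i - 1}.ncard := by
  have ha : ∀ i, 0 < a i := fun i => by linarith [h2 i]
  obtain rfl : q = cofactor a := funext fun i => (hq i).trans (prod_div_eq_cofactor a (ha i))
  obtain rfl : S = Set.range (cofactorSum a) := hS
  have hle : ∀ v : Fin n → ℕ, (∀ i ≠ ⟨0, hn⟩, v i ≤ a i - 1) ↔ ∀ i ≠ ⟨0, hn⟩, v i < a i :=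
    fun v => forall₂_congr fun i _ => by have := ha i; omega
  simp_rw [hle]
  rw [ordNum_add_one_eq (S := Set.range (cofactorSum a)) ⟨0, by simp [cofactorSum]⟩]
  exact (ncard_setOf_cofactorSum_le_eq a hcop ⟨0, hn⟩ (fun i _ => ha i) _).symm

theorem stmt_17 (n : ℕ) (hn : 0 < n) (a : Fin n → ℕ)
    (h2 : ∀ i, 2 ≤ a i) (hmono : StrictMono a)
    (hcop : ∀ i j, i ≠ j → Nat.Coprime (a i) (a j))
    (q : Fin n → ℕ) (hq : ∀ i, q i = (∏ j, a j) / a i)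
    (S : Set ℕ) (hS : S = {m | ∃ v : Fin n → ℕ, ∑ i, v i * q i = m}) :
    ordNum S + 1 =
      {v : Fin n → ℕ | (∑ i, v i * q i ≤ genus S) ∧
        ∀ i : Fin n, i ≠ ⟨0, hn⟩ → v i ≤ a i - 1}.ncard :=
  stmt_17_general n hn a h2 hcop q hq S hS
end
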